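/- arXiv:2503.16995 — 3 statements merged into one kernel-verified Lean document; each statement's English description precedes it below -/
import Mathlib

section
/- For every τ > ν the function x ↦ ⟨x⟩^{−τ} is integrable on ℝ^d, i.e. ∫_{ℝ^d} ⟨x⟩^{−τ} dx < ∞. -/
open MeasureTheory

noncomputable section

/-- The Euclidean norm on `ℝ^d`. -/
def euclNorm {d : ℕ} (x : Fin d → ℝ) : ℝ := Real.sqrt (∑ i, (x i) ^ 2)

/-- The anisotropic dilation `t^{-a} x := (t^{-a_1} x_1, …, t^{-a_d} x_d)`. -/
def aDilNeg {d : ℕ} (a : Fin d → ℝ) (t : ℝ) (x : Fin d → ℝ) : Fin d → ℝ :=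
  fun i => t ^ (-(a i)) * x i

/-- `nrm` is the anisotropic quasi-norm `|·|_a`. -/
def IsAnisoNorm {d : ℕ} (a : Fin d → ℝ) (nrm : (Fin d → ℝ) → ℝ) : Prop :=
  nrm 0 = 0 ∧ ∀ x : Fin d → ℝ, x ≠ 0 → 0 < nrm x ∧ euclNorm (aDilNeg a (nrm x) x) = 1

/-! Write `t = ⟨x⟩`. Comparing single coordinates with the unit Euclidean norm of `t^{-(1,a)}(1,x)`
gives `1 ≤ t` and `|x_i| ≤ t^{a_i}`, hence `∏ i, max 1 |x_i| ≤ t^ν` and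
`t^{-τ} ≤ ∏ i, (max 1 |x_i|)^{-τ/ν}`: a product of integrable functions of one variable,
as `τ/ν > 1`.
Measurability holds because `r ↦ |r^{-a} x|` is strictly decreasing, so that
`{|·|_a ≤ r} = {x | |r^{-a} x| ≤ 1}`. -/

section AnisoNorm

variable {n : ℕ} {a : Fin n → ℝ} {nrm : (Fin n → ℝ) → ℝ}

lemma abs_le_euclNorm (x : Fin n → ℝ) (i : Fin n) : |x i| ≤ euclNorm x :=
  Real.abs_le_sqrt (Finset.single_le_sum (fun j _ => sq_nonneg (x j)) (Finset.mem_univ i))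

lemma abs_aDilNeg {r : ℝ} (hr : 0 < r) (x : Fin n → ℝ) (i : Fin n) :
    |aDilNeg a r x i| = r ^ (-a i) * |x i| := by
  rw [aDilNeg, abs_mul, abs_of_pos (Real.rpow_pos_of_pos hr _)]

lemma strictAntiOn_euclNorm_aDilNeg (ha : ∀ i, 0 < a i) {x : Fin n → ℝ} (hx : x ≠ 0) :
    StrictAntiOn (fun r => euclNorm (aDilNeg a r x)) (Set.Ioi 0) := by
  intro r hr s hs hrs
  have hpow : ∀ i, s ^ (-a i) < r ^ (-a i) := fun i =>
    Real.rpow_lt_rpow_of_neg hr hrs (neg_neg_of_pos (ha i))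
  obtain ⟨j, hj⟩ := Function.ne_iff.mp hx
  refine Real.sqrt_lt_sqrt (by positivity)
    (Finset.sum_lt_sum (fun i _ => ?_) ⟨j, Finset.mem_univ _, ?_⟩)
  · rw [sq_le_sq, abs_aDilNeg hs, abs_aDilNeg hr]
    exact mul_le_mul_of_nonneg_right (hpow i).le (abs_nonneg _)
  · rw [sq_lt_sq, abs_aDilNeg hs, abs_aDilNeg hr]
    exact mul_lt_mul_of_pos_right (hpow j) (abs_pos.mpr hj)

namespace IsAnisoNorm

lemma abs_le_rpow (hnrm : IsAnisoNorm a nrm) {x : Fin n → ℝ} (hx : x ≠ 0) (i : Fin n) :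
    |x i| ≤ nrm x ^ a i := by
  obtain ⟨ht, hunit⟩ := hnrm.2 x hx
  have h := abs_le_euclNorm (aDilNeg a (nrm x) x) i
  rwa [hunit, abs_aDilNeg ht, Real.rpow_neg ht.le, inv_mul_le_iff₀ (by positivity), mul_one] at h

lemma le_iff (hnrm : IsAnisoNorm a nrm) (ha : ∀ i, 0 < a i) {r : ℝ} (hr : 0 < r)
    (x : Fin n → ℝ) : nrm x ≤ r ↔ euclNorm (aDilNeg a r x) ≤ 1 := by
  rcases eq_or_ne x 0 with rfl | hx
  · simp [hnrm.1, hr.le, aDilNeg, euclNorm]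
  · obtain ⟨ht, hunit⟩ := hnrm.2 x hx
    rw [← hunit]
    exact ((strictAntiOn_euclNorm_aDilNeg ha hx).le_iff_ge hr ht).symm

lemma measurable (hnrm : IsAnisoNorm a nrm) (ha : ∀ i, 0 < a i) : Measurable nrm := by
  refine measurable_of_Iic fun r => ?_
  rcases le_or_gt r 0 with hr | hr
  · refine (Set.subsingleton_singleton (a := 0)).anti (fun x hx => ?_) |>.measurableSet
    by_contra hx0
    exact (hnrm.2 x hx0).1.not_ge (le_trans hx hr)
  · have hsub : nrm ⁻¹' Set.Iic r = {x | euclNorm (aDilNeg a r x) ≤ 1} :=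
      Set.ext (hnrm.le_iff ha hr)
    rw [hsub]
    exact measurableSet_le (by unfold euclNorm aDilNeg; fun_prop) measurable_const

end IsAnisoNorm

end AnisoNorm

section Bracket

variable {d : ℕ} {a : Fin d → ℝ} {nrmE : (Fin (d + 1) → ℝ) → ℝ}

lemma cons_one_ne_zero (x : Fin d → ℝ) : (Fin.cons 1 x : Fin (d + 1) → ℝ) ≠ 0 :=
  fun h => one_ne_zero (congrFun h 0)

namespace IsAnisoNorm

lemma one_le_cons_one (hnrmE : IsAnisoNorm (Fin.cons 1 a) nrmE) (x : Fin d → ℝ) :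
    1 ≤ nrmE (Fin.cons 1 x) := by
  simpa using hnrmE.abs_le_rpow (cons_one_ne_zero x) 0

lemma abs_le_cons_one_rpow (hnrmE : IsAnisoNorm (Fin.cons 1 a) nrmE) (x : Fin d → ℝ)
    (i : Fin d) : |x i| ≤ nrmE (Fin.cons 1 x) ^ a i := by
  simpa using hnrmE.abs_le_rpow (cons_one_ne_zero x) i.succ

lemma cons_one_rpow_neg_le_prod (hnrmE : IsAnisoNorm (Fin.cons 1 a) nrmE) (ha : ∀ i, 0 ≤ a i)
    {β : ℝ} (hβ : 0 ≤ β) (x : Fin d → ℝ) :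
    nrmE (Fin.cons 1 x) ^ (-((∑ i, a i) * β)) ≤ ∏ i, max 1 |x i| ^ (-β) := by
  set t := nrmE (Fin.cons 1 x)
  have ht : 1 ≤ t := hnrmE.one_le_cons_one x
  have hmax : ∀ i, 0 < max 1 |x i| := fun i => one_pos.trans_le (le_max_left _ _)
  calc t ^ (-((∑ i, a i) * β)) = (∏ i, t ^ a i) ^ (-β) := by
        rw [← Real.rpow_sum_of_pos (by positivity), ← Real.rpow_mul (by positivity), mul_neg]
    _ ≤ (∏ i, max 1 |x i|) ^ (-β) :=
        Real.rpow_le_rpow_of_nonpos (Finset.prod_pos fun i _ => hmax i)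
          (Finset.prod_le_prod (fun i _ => (hmax i).le) fun i _ =>
            max_le (Real.one_le_rpow ht (ha i)) (hnrmE.abs_le_cons_one_rpow x i))
          (neg_nonpos.mpr hβ)
    _ = ∏ i, max 1 |x i| ^ (-β) :=
        (Real.finsetProd_rpow _ _ (fun i _ => (hmax i).le) _).symm

end IsAnisoNorm

end Bracket

lemma integrable_max_one_abs_rpow_neg {β : ℝ} (hβ : 1 < β) :
    Integrable (fun u : ℝ => max 1 |u| ^ (-β)) := by
  have hdom : Integrable (fun u : ℝ => 2 ^ β * (1 + ‖u‖) ^ (-β)) :=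
    (integrable_one_add_norm (by simpa using hβ)).const_mul _
  refine hdom.mono' (by fun_prop : Measurable _).aestronglyMeasurable
    (Filter.Eventually.of_forall fun u => ?_)
  rw [Real.norm_of_nonneg (by positivity)]
  calc max 1 |u| ^ (-β) ≤ (2⁻¹ * (1 + |u|)) ^ (-β) :=
        Real.rpow_le_rpow_of_nonpos (by positivity) (by grind) (by linarith)
    _ = 2 ^ β * (1 + ‖u‖) ^ (-β) := by
        rw [Real.mul_rpow (by norm_num) (by positivity), Real.inv_rpow (by norm_num),
          Real.rpow_neg (by norm_num : (0 : ℝ) ≤ 2), inv_inv, Real.norm_eq_abs]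

/-- for `τ > ν = a_1 + ⋯ + a_d` the function `x ↦ ⟨x⟩^{-τ}` is integrable
on `ℝ^d`, where `⟨x⟩ := |(1,x)|_{(1,a)}` is the anisotropic bracket. -/
theorem stmt4 (d : ℕ) (hd : 1 ≤ d) (a : Fin d → ℝ) (ha : ∀ i, 1 ≤ a i)
    (nrmE : (Fin (d + 1) → ℝ) → ℝ) (hnrmE : IsAnisoNorm (Fin.cons 1 a) nrmE)
    (τ : ℝ) (hτ : (∑ i, a i) < τ) :
    Integrable (fun x : Fin d → ℝ => nrmE (Fin.cons 1 x) ^ (-τ)) volume := by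
  have hν : 0 < ∑ i, a i :=
    Finset.sum_pos (fun i _ => one_pos.trans_le (ha i)) (Finset.univ_nonempty_iff.2 ⟨⟨0, hd⟩⟩)
  have hA : ∀ j, 0 < (Fin.cons 1 a : Fin (d + 1) → ℝ) j :=
    Fin.cases one_pos fun i => one_pos.trans_le (ha i)
  have hβ : 1 < τ / ∑ i, a i := (one_lt_div hν).mpr hτ
  refine (Integrable.fintype_prod fun _ => integrable_max_one_abs_rpow_neg hβ).mono' ?_
    (Filter.Eventually.of_forall fun x => ?_)
  · exact ((hnrmE.measurable hA).comp (by fun_prop)).pow_const _ |>.aestronglyMeasurable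
  · have hbound := hnrmE.cons_one_rpow_neg_le_prod (fun i => zero_le_one.trans (ha i))
      (zero_le_one.trans hβ.le) x
    rw [mul_div_cancel₀ τ hν.ne'] at hbound
    rwa [Real.norm_of_nonneg (Real.rpow_nonneg (zero_le_one.trans (hnrmE.one_le_cons_one x)) _)]
end
end

section
/- There exist constants c_3, c_4 > 0, depending only on a and β, such that for every integer j ≥ 1 and every rectangle R ∈ 𝒜_j one has c_3 j^{ν(β−1)} ≤ |R| ≤ c_4 j^{ν(β−1)}. -/
open MeasureTheory

noncomputable section

/-- Number of outer intervals on each side at level `j`: `⌈j^{a-1}⌉`. -/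
def mOut (a : ℝ) (j : ℕ) : ℤ := ⌈(j : ℝ) ^ (a - 1)⌉

/-- Number of inner intervals at level `j`: `⌈j^{a}⌉`. -/
def mIn (a : ℝ) (j : ℕ) : ℤ := ⌈(j : ℝ) ^ a⌉

/-- Total number of intervals in the partition `𝒜_j^i`. -/
def numIv (a : ℝ) (j : ℕ) : ℤ := mIn a j + 2 * mOut a j

/-- Common length of the outer intervals. -/
def lenO (a β : ℝ) (j : ℕ) : ℝ :=
  (((j : ℝ) + 1) ^ (a * β) - (j : ℝ) ^ (a * β)) / ((mOut a j : ℤ) : ℝ)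

/-- Common length of the inner intervals. -/
def lenI (a β : ℝ) (j : ℕ) : ℝ :=
  2 * (j : ℝ) ^ (a * β) / ((mIn a j : ℤ) : ℝ)

/-- The `k`-th knot (from the left, `k = 0, …, numIv`) of the partition `𝒜_j^i` of
`A_j^i = [−(j+1)^{aβ}, (j+1)^{aβ})`: the two components of `A_j^i ∖ B_j^i` are divided
into `⌈j^{a-1}⌉` equal intervals each, and `B_j^i = [−j^{aβ}, j^{aβ})` into `⌈j^{a}⌉`
equal intervals. -/
def knot (a β : ℝ) (j : ℕ) (k : ℤ) : ℝ :=
  if k ≤ mOut a j then -((j : ℝ) + 1) ^ (a * β) + (k : ℝ) * lenO a β j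
  else if k ≤ mOut a j + mIn a j then
    -(j : ℝ) ^ (a * β) + ((k - mOut a j : ℤ) : ℝ) * lenI a β j
  else (j : ℝ) ^ (a * β) + ((k - mOut a j - mIn a j : ℤ) : ℝ) * lenO a β j

/-- The `k`-th interval of the partition `𝒜_j^i`. -/
def ivl (a β : ℝ) (j : ℕ) (k : ℤ) : Set ℝ :=
  Set.Ico (knot a β j k) (knot a β j (k + 1))

/-- The partition `𝒜_j^i` (with `a = a_i`), as a family of subsets of `ℝ`. -/
def partA (a β : ℝ) (j : ℕ) : Set (Set ℝ) :=
  {I | ∃ k : ℤ, 0 ≤ k ∧ k < numIv a j ∧ I = ivl a β j k}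

/-- The index `k` corresponds to an inner interval. -/
def isInnerIdx (a : ℝ) (j : ℕ) (k : ℤ) : Prop :=
  mOut a j ≤ k ∧ k < mOut a j + mIn a j

/-- The family `ℬ_j^i` of inner intervals. -/
def partInner (a β : ℝ) (j : ℕ) : Set (Set ℝ) :=
  {I | ∃ k : ℤ, isInnerIdx a j k ∧ I = ivl a β j k}

/-- `𝒜_j`: rectangles `I_1 × ⋯ × I_d` with `I_i ∈ 𝒜_j^i`, encoded by their factors. -/
def rectA {d : ℕ} (a : Fin d → ℝ) (β : ℝ) (j : ℕ) : Set (Fin d → Set ℝ) :=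
  {R | ∀ i, R i ∈ partA (a i) β j}

/-- `ℬ_j`: rectangles all of whose factors are inner intervals. -/
def rectB {d : ℕ} (a : Fin d → ℝ) (β : ℝ) (j : ℕ) : Set (Fin d → Set ℝ) :=
  {R | ∀ i, R i ∈ partInner (a i) β j}

/-- `𝒦_j := 𝒜_j ∖ ℬ_j` for `j ≥ 1`. -/
def rectK {d : ℕ} (a : Fin d → ℝ) (β : ℝ) (j : ℕ) : Set (Fin d → Set ℝ) :=
  rectA a β j \ rectB a β j

/-- `𝒦_0 := {[−1,1)^d}`. -/
def rectK0 (d : ℕ) : Set (Fin d → Set ℝ) := {fun _ => Set.Ico (-1 : ℝ) 1}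

/-- `𝒦 := ⋃_{j ≥ 0} 𝒦_j`. -/
def rectKall {d : ℕ} (a : Fin d → ℝ) (β : ℝ) : Set (Fin d → Set ℝ) :=
  rectK0 d ∪ ⋃ (j : ℕ) (_ : 1 ≤ j), rectK a β j

/-- The volume `|R|` of a rectangle, the product of its side lengths. -/
def rVol {d : ℕ} (R : Fin d → Set ℝ) : ℝ := ∏ i, (volume (R i)).toReal

section Aux

variable {a β : ℝ} {j : ℕ}

lemma hj1 (hj : 1 ≤ j) : (1 : ℝ) ≤ (j : ℝ) := by exact_mod_cast hj
lemma hj0 (hj : 1 ≤ j) : (0 : ℝ) < (j : ℝ) := lt_of_lt_of_le one_pos (hj1 hj)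

/-- `1 ≤ j^z` for `z ≥ 0`. -/
lemma one_le_jrpow (hj : 1 ≤ j) {z : ℝ} (hz : 0 ≤ z) : (1 : ℝ) ≤ (j : ℝ) ^ z := by
  calc (1:ℝ) = (1:ℝ) ^ z := (Real.one_rpow z).symm
    _ ≤ (j:ℝ) ^ z := Real.rpow_le_rpow zero_le_one (hj1 hj) hz

lemma mOut_lb (ha : 1 ≤ a) (hj : 1 ≤ j) : (j : ℝ) ^ (a - 1) ≤ ((mOut a j : ℤ) : ℝ) :=
  Int.le_ceil _

lemma mOut_ub (ha : 1 ≤ a) (hj : 1 ≤ j) : ((mOut a j : ℤ) : ℝ) ≤ 2 * (j : ℝ) ^ (a - 1) := by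
  have h1 : (1:ℝ) ≤ (j : ℝ) ^ (a - 1) := one_le_jrpow hj (by linarith)
  have := (Int.ceil_lt_add_one ((j : ℝ) ^ (a - 1))).le
  unfold mOut; linarith

lemma mOut_pos (ha : 1 ≤ a) (hj : 1 ≤ j) : (0:ℝ) < ((mOut a j : ℤ) : ℝ) :=
  lt_of_lt_of_le one_pos ((one_le_jrpow hj (by linarith)).trans (mOut_lb ha hj))

lemma mIn_lb (ha : 1 ≤ a) (hj : 1 ≤ j) : (j : ℝ) ^ a ≤ ((mIn a j : ℤ) : ℝ) := Int.le_ceil _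

lemma mIn_ub (ha : 1 ≤ a) (hj : 1 ≤ j) : ((mIn a j : ℤ) : ℝ) ≤ 2 * (j : ℝ) ^ a := by
  have h1 : (1:ℝ) ≤ (j : ℝ) ^ a := one_le_jrpow hj (by linarith)
  have := (Int.ceil_lt_add_one ((j : ℝ) ^ a)).le
  unfold mIn; linarith

lemma mIn_pos (ha : 1 ≤ a) (hj : 1 ≤ j) : (0:ℝ) < ((mIn a j : ℤ) : ℝ) :=
  lt_of_lt_of_le one_pos ((one_le_jrpow hj (by linarith)).trans (mIn_lb ha hj))

lemma mOut_pos' (ha : 1 ≤ a) (hj : 1 ≤ j) : 0 < mOut a j := by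
  have := mOut_pos (a := a) ha hj; exact_mod_cast this
lemma mIn_pos' (ha : 1 ≤ a) (hj : 1 ≤ j) : 0 < mIn a j := by
  have := mIn_pos (a := a) ha hj; exact_mod_cast this

/-- Lower bound on the numerator of `lenO`. -/
lemma N_lb (ha : 1 ≤ a) (hβ : 1 ≤ β) (hj : 1 ≤ j) :
    (j : ℝ) ^ (a * β - 1) ≤ ((j : ℝ) + 1) ^ (a * β) - (j : ℝ) ^ (a * β) := by
  have hJ : (1:ℝ) ≤ (j:ℝ) := hj1 hj
  have hp : (1:ℝ) ≤ a * β := by nlinarith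
  have h2 : (j:ℝ) ^ (a * β - 1) ≤ ((j:ℝ) + 1) ^ (a * β - 1) :=
    Real.rpow_le_rpow (by linarith) (by linarith) (by linarith)
  have e1 : ((j:ℝ) + 1) ^ (a * β) = ((j:ℝ) + 1) * ((j:ℝ) + 1) ^ (a * β - 1) := by
    nth_rewrite 1 [show a * β = 1 + (a * β - 1) by ring]
    rw [Real.rpow_add (by linarith), Real.rpow_one]
  have e2 : (j:ℝ) ^ (a * β) = (j:ℝ) * (j:ℝ) ^ (a * β - 1) := by
    nth_rewrite 1 [show a * β = 1 + (a * β - 1) by ring]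
    rw [Real.rpow_add (hj0 hj), Real.rpow_one]
  rw [e1, e2]
  nlinarith [Real.rpow_nonneg (le_of_lt (hj0 hj)) (a * β - 1)]

/-- Upper bound on the numerator of `lenO`. -/
lemma N_ub (ha : 1 ≤ a) (hβ : 1 ≤ β) (hj : 1 ≤ j) :
    ((j : ℝ) + 1) ^ (a * β) - (j : ℝ) ^ (a * β) ≤
      a * β * Real.exp (a * β) * (j : ℝ) ^ (a * β - 1) := by
  set p := a * β with hpdef
  have hJ : (1:ℝ) ≤ (j:ℝ) := hj1 hj
  have hJ0 : (0:ℝ) < (j:ℝ) := hj0 hj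
  have hp : (1:ℝ) ≤ p := by rw [hpdef]; nlinarith
  set t := 1 / (j:ℝ) with htdef
  have ht0 : 0 < t := by positivity
  have ht1 : t ≤ 1 := by rw [htdef]; exact div_le_one_of_le₀ hJ (by linarith)
  -- (j+1)^p = j^p * (1+t)^p
  have hfac : ((j:ℝ) + 1) ^ p = (j:ℝ) ^ p * (1 + t) ^ p := by
    rw [← Real.mul_rpow (by linarith) (by linarith)]
    congr 1
    rw [htdef]
    field_simp
  -- (1+t)^p ≤ exp (p*t)
  have hlog : Real.log (1 + t) ≤ t := by
    have := Real.log_le_sub_one_of_pos (x := 1 + t) (by linarith)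
    linarith
  have h2 : (1 + t) ^ p ≤ Real.exp (p * t) := by
    rw [Real.rpow_def_of_pos (by linarith)]
    exact Real.exp_le_exp.2 (by nlinarith)
  -- exp(pt) - 1 ≤ p t exp(pt) ≤ p t exp p
  have hpt : 0 ≤ p * t := by positivity
  have h3 : Real.exp (p * t) - 1 ≤ p * t * Real.exp (p * t) := by
    have h := Real.add_one_le_exp (-(p * t))
    have hpos := Real.exp_pos (p * t)
    have hinv : Real.exp (-(p * t)) * Real.exp (p * t) = 1 := by
      rw [← Real.exp_add]; simp
    nlinarith [mul_le_mul_of_nonneg_right h (le_of_lt hpos)]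
  have h4 : Real.exp (p * t) ≤ Real.exp p := Real.exp_le_exp.2 (by nlinarith)
  have h5 : ((j:ℝ)+1)^p - (j:ℝ)^p ≤ (j:ℝ)^p * (p * t * Real.exp p) := by
    rw [hfac]
    have hjp : (0:ℝ) < (j:ℝ)^p := Real.rpow_pos_of_pos hJ0 p
    have : (1 + t)^p - 1 ≤ p * t * Real.exp p := by
      have hstep : Real.exp (p * t) ≤ 1 + p * t * Real.exp p := by
        nlinarith [mul_le_mul_of_nonneg_left h4 hpt]
      linarith [h2.trans hstep]
    nlinarith
  have h6 : (j:ℝ)^p * (p * t * Real.exp p) = p * Real.exp p * (j:ℝ)^(p - 1) := by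
    rw [Real.rpow_sub hJ0, Real.rpow_one, htdef]
    field_simp
  linarith [h5, h6.le, h6.ge]

end Aux

section Aux2

variable {a β : ℝ} {j : ℕ}

lemma mulO (ha : 1 ≤ a) (hj : 1 ≤ j) :
    ((mOut a j : ℤ) : ℝ) * lenO a β j = ((j:ℝ) + 1) ^ (a * β) - (j:ℝ) ^ (a * β) := by
  unfold lenO
  rw [mul_comm, div_mul_cancel₀ _ (mOut_pos ha hj).ne']

lemma mulI (ha : 1 ≤ a) (hj : 1 ≤ j) :
    ((mIn a j : ℤ) : ℝ) * lenI a β j = 2 * (j:ℝ) ^ (a * β) := by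
  unfold lenI
  rw [mul_comm, div_mul_cancel₀ _ (mIn_pos ha hj).ne']

lemma knot_sub_inner (ha : 1 ≤ a) (hβ : 1 ≤ β) (hj : 1 ≤ j) {k : ℤ}
    (hk : isInnerIdx a j k) :
    knot a β j (k + 1) - knot a β j k = lenI a β j := by
  obtain ⟨hkl, hku⟩ := hk
  have hM := mOut_pos' ha hj
  have hN := mIn_pos' ha hj
  have hMO := mulO (β := β) (j := j) ha hj
  unfold knot
  by_cases hc : k ≤ mOut a j
  · have hk' : k = mOut a j := le_antisymm hc hkl
    rw [if_neg (by omega), if_pos (by omega), if_pos hc]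
    rw [hk']
    push_cast
    linear_combination -hMO
  · rw [if_neg (by omega), if_pos (by omega), if_neg hc, if_pos (by omega)]
    push_cast
    ring

lemma knot_sub_outer (ha : 1 ≤ a) (hβ : 1 ≤ β) (hj : 1 ≤ j) {k : ℤ}
    (h0 : 0 ≤ k) (h1 : k < numIv a j) (hk : ¬ isInnerIdx a j k) :
    knot a β j (k + 1) - knot a β j k = lenO a β j := by
  have hM := mOut_pos' ha hj
  have hN := mIn_pos' ha hj
  have hMI := mulI (β := β) (j := j) ha hj
  unfold isInnerIdx at hk
  push_neg at hk
  unfold numIv at h1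
  unfold knot
  by_cases hc : k + 1 ≤ mOut a j
  · rw [if_pos hc, if_pos (by omega)]
    push_cast; ring
  · have hkge : mOut a j + mIn a j ≤ k := by
      by_cases h : mOut a j ≤ k
      · exact hk h
      · omega
    by_cases hc4 : k ≤ mOut a j + mIn a j
    · have hk' : k = mOut a j + mIn a j := le_antisymm hc4 hkge
      rw [if_neg (by omega), if_neg (by omega), if_neg (by omega), if_pos hc4]
      rw [hk']
      push_cast
      linear_combination -hMI
    · rw [if_neg (by omega), if_neg (by omega), if_neg (by omega), if_neg hc4]
      push_cast; ring

lemma lenI_pos (ha : 1 ≤ a) (hβ : 1 ≤ β) (hj : 1 ≤ j) : 0 < lenI a β j :=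
  div_pos (by positivity) (mIn_pos ha hj)

lemma lenO_pos (ha : 1 ≤ a) (hβ : 1 ≤ β) (hj : 1 ≤ j) : 0 < lenO a β j := by
  have h := N_lb ha hβ hj
  have : (0:ℝ) < (j:ℝ) ^ (a * β - 1) := Real.rpow_pos_of_pos (hj0 hj) _
  exact div_pos (by linarith) (mOut_pos ha hj)

lemma lenI_lb (ha : 1 ≤ a) (hβ : 1 ≤ β) (hj : 1 ≤ j) :
    (1/2) * (j:ℝ) ^ (a * (β - 1)) ≤ lenI a β j := by
  have hJ0 := hj0 hj
  have e : (1/2) * (j:ℝ) ^ (a * (β - 1)) = (j:ℝ) ^ (a * β) / (2 * (j:ℝ) ^ a) := by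
    rw [show a * (β - 1) = a * β - a by ring, Real.rpow_sub hJ0]
    ring
  rw [e]
  unfold lenI
  apply div_le_div₀ (by positivity) (by nlinarith [Real.rpow_pos_of_pos hJ0 (a*β)])
    (mIn_pos ha hj) (mIn_ub ha hj)

lemma lenI_ub (ha : 1 ≤ a) (hβ : 1 ≤ β) (hj : 1 ≤ j) :
    lenI a β j ≤ 2 * (j:ℝ) ^ (a * (β - 1)) := by
  have hJ0 := hj0 hj
  have e : 2 * (j:ℝ) ^ (a * (β - 1)) = 2 * (j:ℝ) ^ (a * β) / ((j:ℝ) ^ a) := by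
    rw [show a * (β - 1) = a * β - a by ring, Real.rpow_sub hJ0]
    ring
  rw [e]
  unfold lenI
  apply div_le_div₀ (by positivity) le_rfl (Real.rpow_pos_of_pos hJ0 a) (mIn_lb ha hj)

lemma lenO_lb (ha : 1 ≤ a) (hβ : 1 ≤ β) (hj : 1 ≤ j) :
    (1/2) * (j:ℝ) ^ (a * (β - 1)) ≤ lenO a β j := by
  have hJ0 := hj0 hj
  have e : (1/2) * (j:ℝ) ^ (a * (β - 1)) = (j:ℝ) ^ (a * β - 1) / (2 * (j:ℝ) ^ (a - 1)) := by
    rw [show a * (β - 1) = (a * β - 1) - (a - 1) by ring, Real.rpow_sub hJ0]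
    ring
  rw [e]
  unfold lenO
  have hN := N_lb ha hβ hj
  have h0 : (0:ℝ) < (j:ℝ) ^ (a * β - 1) := Real.rpow_pos_of_pos hJ0 _
  apply div_le_div₀ (by linarith) hN (mOut_pos ha hj) (mOut_ub ha hj)

lemma lenO_ub (ha : 1 ≤ a) (hβ : 1 ≤ β) (hj : 1 ≤ j) :
    lenO a β j ≤ a * β * Real.exp (a * β) * (j:ℝ) ^ (a * (β - 1)) := by
  have hJ0 := hj0 hj
  have hp : (1:ℝ) ≤ a * β := by nlinarith
  have e : a * β * Real.exp (a * β) * (j:ℝ) ^ (a * (β - 1)) =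
      (a * β * Real.exp (a * β) * (j:ℝ) ^ (a * β - 1)) / ((j:ℝ) ^ (a - 1)) := by
    rw [show a * (β - 1) = (a * β - 1) - (a - 1) by ring, Real.rpow_sub hJ0]
    ring
  rw [e]
  unfold lenO
  have hN := N_ub ha hβ hj
  have h0 : (0:ℝ) < (j:ℝ) ^ (a * β - 1) := Real.rpow_pos_of_pos hJ0 _
  have hE : (0:ℝ) < Real.exp (a * β) := Real.exp_pos _
  apply div_le_div₀ (by positivity) hN (Real.rpow_pos_of_pos hJ0 _) (mOut_lb ha hj)

lemma vol_bounds (ha : 1 ≤ a) (hβ : 1 ≤ β) (hj : 1 ≤ j) {k : ℤ}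
    (h0 : 0 ≤ k) (h1 : k < numIv a j) :
    (1/2) * (j:ℝ) ^ (a * (β - 1)) ≤ (volume (ivl a β j k)).toReal ∧
      (volume (ivl a β j k)).toReal ≤
        (2 + a * β * Real.exp (a * β)) * (j:ℝ) ^ (a * (β - 1)) := by
  have hJ0 := hj0 hj
  have hx : (0:ℝ) ≤ (j:ℝ) ^ (a * (β - 1)) := (Real.rpow_pos_of_pos hJ0 _).le
  have hp : (1:ℝ) ≤ a * β := by nlinarith
  have hE : (1:ℝ) ≤ Real.exp (a * β) := by
    have := Real.add_one_le_exp (a * β); linarith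
  by_cases hk : isInnerIdx a j k
  · have h := knot_sub_inner ha hβ hj hk
    have hv : (volume (ivl a β j k)).toReal = lenI a β j := by
      unfold ivl
      rw [Real.volume_Ico, ENNReal.toReal_ofReal (by linarith [lenI_pos ha hβ hj])]
      exact h
    rw [hv]
    refine ⟨lenI_lb ha hβ hj, (lenI_ub ha hβ hj).trans ?_⟩
    nlinarith [mul_nonneg (show (0:ℝ) ≤ a * β * Real.exp (a * β) by positivity) hx]
  · have h := knot_sub_outer ha hβ hj h0 h1 hk
    have hv : (volume (ivl a β j k)).toReal = lenO a β j := by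
      unfold ivl
      rw [Real.volume_Ico, ENNReal.toReal_ofReal (by linarith [lenO_pos ha hβ hj])]
      exact h
    rw [hv]
    refine ⟨lenO_lb ha hβ hj, (lenO_ub ha hβ hj).trans (by nlinarith)⟩

end Aux2

/-- Lemma 3.1(b): `|R| ≍ j^{ν(β−1)}` uniformly over `j ≥ 1` and `R ∈ 𝒜_j`,
where `ν = a_1 + ⋯ + a_d`. -/
theorem stmt6 (d : ℕ) (hd : 1 ≤ d) (a : Fin d → ℝ) (ha : ∀ i, 1 ≤ a i)
    (β : ℝ) (hβ : 1 ≤ β) :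
    ∃ c₃ c₄ : ℝ, 0 < c₃ ∧ 0 < c₄ ∧ ∀ j : ℕ, 1 ≤ j → ∀ R ∈ rectA a β j,
      c₃ * (j : ℝ) ^ ((∑ i, a i) * (β - 1)) ≤ rVol R ∧
        rVol R ≤ c₄ * (j : ℝ) ^ ((∑ i, a i) * (β - 1)) := by
  refine ⟨(1/2) ^ d, ∏ i, (2 + a i * β * Real.exp (a i * β)), by positivity, ?_, ?_⟩
  · apply Finset.prod_pos
    intro i _
    have hE := Real.exp_pos (a i * β)
    have h1 := ha i
    have h2 : 0 < a i * β := by nlinarith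
    nlinarith [mul_pos h2 hE]
  intro j hj R hR
  have hJ0 : (0:ℝ) < (j:ℝ) := hj0 hj
  have hbd : ∀ i, (1/2) * (j:ℝ) ^ (a i * (β - 1)) ≤ (volume (R i)).toReal ∧
      (volume (R i)).toReal ≤ (2 + a i * β * Real.exp (a i * β)) * (j:ℝ) ^ (a i * (β - 1)) := by
    intro i
    obtain ⟨k, hk0, hk1, hEq⟩ := hR i
    rw [hEq]
    exact vol_bounds (ha i) hβ hj hk0 hk1
  have hsum : (j:ℝ) ^ ((∑ i, a i) * (β - 1)) = ∏ i, (j:ℝ) ^ (a i * (β - 1)) := by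
    rw [Finset.sum_mul]
    exact Real.rpow_sum_of_pos hJ0 _ _
  constructor
  · calc (1/2 : ℝ) ^ d * (j:ℝ) ^ ((∑ i, a i) * (β - 1))
        = ∏ i, (1/2) * (j:ℝ) ^ (a i * (β - 1)) := by
          rw [hsum, Finset.prod_mul_distrib, Finset.prod_const, Finset.card_univ,
            Fintype.card_fin]
      _ ≤ ∏ i, (volume (R i)).toReal := by
          apply Finset.prod_le_prod
          · intro i _; positivity
          · intro i _; exact (hbd i).1
      _ = rVol R := rfl
  · calc rVol R = ∏ i, (volume (R i)).toReal := rfl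
      _ ≤ ∏ i, (2 + a i * β * Real.exp (a i * β)) * (j:ℝ) ^ (a i * (β - 1)) := by
          apply Finset.prod_le_prod
          · intro i _; exact ENNReal.toReal_nonneg
          · intro i _; exact (hbd i).2
      _ = (∏ i, (2 + a i * β * Real.exp (a i * β))) * (j:ℝ) ^ ((∑ i, a i) * (β - 1)) := by
          rw [hsum, Finset.prod_mul_distrib]
end
end

section
/- There exists a natural number L, depending only on a and d, such that for every z ∈ ℝ^d the number of multi-indices n ∈ ℕ₀^d with |z − π(n + (1/2,…,1/2))|_a < 1 is at most L. -/
noncomputable section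

lemma aux_small {d : ℕ} (a : Fin d → ℝ) (ha : ∀ i, 1 ≤ a i)
    (nrm : (Fin d → ℝ) → ℝ) (hnrm : IsAnisoNorm a nrm)
    {x : Fin d → ℝ} (hx : nrm x < 1) (i : Fin d) : |x i| ≤ 1 := by
  by_cases h0 : x = 0
  · simp [h0]
  obtain ⟨hpos, heq⟩ := hnrm.2 x h0
  set t := nrm x with ht
  have hsum : ∑ j, (t ^ (-(a j)) * x j) ^ 2 = 1 := by
    have hnn : 0 ≤ ∑ j, (t ^ (-(a j)) * x j) ^ 2 :=
      Finset.sum_nonneg fun j _ => sq_nonneg _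
    have h := heq
    unfold euclNorm aDilNeg at h
    nlinarith [Real.sq_sqrt hnn]
  have hterm : (t ^ (-(a i)) * x i) ^ 2 ≤ 1 := by
    rw [← hsum]
    exact Finset.single_le_sum (f := fun j => (t ^ (-(a j)) * x j) ^ 2)
      (fun j _ => sq_nonneg _) (Finset.mem_univ i)
  have habs : |t ^ (-(a i)) * x i| ≤ 1 :=
    abs_le.mpr ⟨by nlinarith, by nlinarith⟩
  have hmul : t ^ (-(a i)) * t ^ (a i) = 1 := by
    rw [← Real.rpow_add hpos]; simp
  have hxi : |x i| ≤ t ^ (a i) := by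
    have h1 : |x i| = |t ^ (-(a i)) * x i| * t ^ (a i) := by
      rw [abs_mul, abs_of_nonneg (Real.rpow_nonneg hpos.le _)]
      linear_combination (-|x i|) * hmul
    rw [h1]
    calc |t ^ (-(a i)) * x i| * t ^ (a i) ≤ 1 * t ^ (a i) := by
          exact mul_le_mul_of_nonneg_right habs (Real.rpow_nonneg hpos.le _)
      _ = t ^ (a i) := one_mul _
  have hta : t ^ (a i) ≤ 1 := by
    calc t ^ (a i) ≤ t ^ (1 : ℝ) :=
          Real.rpow_le_rpow_of_exponent_ge hpos hx.le (ha i)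
      _ = t := Real.rpow_one t
      _ ≤ 1 := hx.le
  linarith

/-- a uniform overlap bound: there is `L ∈ ℕ` (depending only on `a`, `d`)
such that for every `z ∈ ℝ^d` the set of `n ∈ ℕ₀^d` with `|z − π(n + (1/2,…,1/2))|_a < 1`
is finite with at most `L` elements. -/
theorem stmt10 (d : ℕ) (hd : 1 ≤ d) (a : Fin d → ℝ) (ha : ∀ i, 1 ≤ a i)
    (nrm : (Fin d → ℝ) → ℝ) (hnrm : IsAnisoNorm a nrm) :
    ∃ L : ℕ, ∀ z : Fin d → ℝ,
      {n : Fin d → ℕ | nrm (fun i => z i - Real.pi * ((n i : ℝ) + 1 / 2)) < 1}.Finite ∧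
      {n : Fin d → ℕ | nrm (fun i => z i - Real.pi * ((n i : ℝ) + 1 / 2)) < 1}.ncard ≤ L := by
  refine ⟨1, fun z => ?_⟩
  set S := {n : Fin d → ℕ | nrm (fun i => z i - Real.pi * ((n i : ℝ) + 1 / 2)) < 1} with hS
  have hsub : S.Subsingleton := by
    intro n hn m hm
    funext i
    have h1 : |z i - Real.pi * ((n i : ℝ) + 1 / 2)| ≤ 1 :=
      aux_small a ha nrm hnrm hn i
    have h2 : |z i - Real.pi * ((m i : ℝ) + 1 / 2)| ≤ 1 :=
      aux_small a ha nrm hnrm hm i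
    have hpi : (3 : ℝ) < Real.pi := Real.pi_gt_three
    have hdiff : Real.pi * |(n i : ℝ) - (m i : ℝ)| ≤ 2 := by
      have : Real.pi * ((n i : ℝ) + 1 / 2) - Real.pi * ((m i : ℝ) + 1 / 2)
          = Real.pi * ((n i : ℝ) - (m i : ℝ)) := by ring
      have h3 : |Real.pi * ((n i : ℝ) - (m i : ℝ))| ≤ 2 := by
        rw [← this]
        have := abs_sub_abs_le_abs_sub (z i - Real.pi * ((n i : ℝ) + 1 / 2))
          (z i - Real.pi * ((m i : ℝ) + 1 / 2))
        calc |Real.pi * ((n i : ℝ) + 1 / 2) - Real.pi * ((m i : ℝ) + 1 / 2)|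
            = |(z i - Real.pi * ((m i : ℝ) + 1 / 2)) - (z i - Real.pi * ((n i : ℝ) + 1 / 2))| := by
              ring_nf
          _ ≤ |z i - Real.pi * ((m i : ℝ) + 1 / 2)| + |z i - Real.pi * ((n i : ℝ) + 1 / 2)| :=
              abs_sub _ _
          _ ≤ 2 := by linarith
      rwa [abs_mul, abs_of_pos Real.pi_pos] at h3
    have : |(n i : ℝ) - (m i : ℝ)| < 1 := by
      nlinarith [abs_nonneg ((n i : ℝ) - (m i : ℝ))]
    rw [abs_sub_lt_iff] at this
    obtain ⟨ha1, ha2⟩ := this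
    have hb1 : (n i : ℝ) < (m i : ℝ) + 1 := by linarith
    have hb2 : (m i : ℝ) < (n i : ℝ) + 1 := by linarith
    have hc1 : n i < m i + 1 := by exact_mod_cast hb1
    have hc2 : m i < n i + 1 := by exact_mod_cast hb2
    omega
  exact ⟨hsub.finite, (Set.ncard_le_one_iff_eq hsub.finite).mpr (by
    rcases hsub.eq_empty_or_singleton with h | ⟨x, h⟩
    · exact Or.inl h
    · exact Or.inr ⟨x, h⟩)⟩
end
end
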